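/- A valued structure Γ with domain ℚ whose cost functions are all (wma, avg)-convex has, for every m ∈ ℕ, a (2m+1)-ary block-symmetric fractional polymorphism ω^{(2m+1)} defined by ω^{(2m+1)}(g) = 1 if g = wma^{(2m+1)} and 0 otherwise; i.e., the deterministic measure concentrated on the (2m+1)-ary 2-period weighted centred moving average is a fractional polymorphism of Γ. -/

import Mathlib

open scoped BigOperators NNReal
open Function

noncomputable section

/-- Costs take values in `ℚ ∪ {+∞}`. -/
abbrev Cost := WithTop ℚ

/-- Embedding of extended rationals into the extended reals. -/
def toE (x : Cost) : EReal := WithTop.recTopCoe ⊤ (fun q : ℚ => ((q : ℝ) : EReal)) x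

/-- A valued structure over signature `τ` (with arities `ar`) and domain `C`. -/
structure VStruct (τ : Type) (ar : τ → ℕ) (C : Type) where
  cost : (f : τ) → ((Fin (ar f)) → C) → Cost

/-- A fractional homomorphism from `Δ` (domain `D`) to `Γ` (domain `C`): a discrete
probability measure on maps `D → C` (given by its weight function, which has countable,
non-empty support and total mass `1`) such that for every function symbol and every tuple
the expected cost in `Γ` is at most the cost in `Δ`. -/
structure FracHom {τ : Type} {ar : τ → ℕ} {D C : Type}
    (Δ : VStruct τ ar D) (Γ : VStruct τ ar C) where
  w : (D → C) → ℝ≥0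
  countable_support : (Function.support w).Countable
  support_nonempty : (Function.support w).Nonempty
  total : HasSum w 1
  le : ∀ (f : τ) (a : Fin (ar f) → D),
    (∑' h : D → C, ((w h : ℝ) : EReal) * toE (Γ.cost f (fun i => h (a i))))
      ≤ toE (Δ.cost f a)

/-- An `m`-ary fractional polymorphism of a valued structure `Γ` with domain `C`. -/
structure FracPol {τ : Type} {ar : τ → ℕ} {C : Type} (Γ : VStruct τ ar C) (m : ℕ) where
  w : ((Fin m → C) → C) → ℝ≥0
  countable_support : (Function.support w).Countable
  support_nonempty : (Function.support w).Nonempty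
  total : HasSum w 1
  le : ∀ (f : τ) (a : Fin m → (Fin (ar f) → C)),
    (∑' g : (Fin m → C) → C,
        ((w g : ℝ) : EReal) * toE (Γ.cost f (fun t => g (fun i => a i t))))
      ≤ (((1 : ℝ) / m : ℝ) : EReal) * ∑ i, toE (Γ.cost f (a i))

/-- The `k`-ary 2-period weighted centred moving average (indices run over `1, …, k`,
realised as `i+1` for `i : Fin k`). -/
def wma (k : ℕ) (x : Fin k → ℚ) : ℚ :=
  (1 / (3 * (k : ℚ))) *
    ((∑ i : Fin k, if (i : ℕ) + 1 ≤ k / 4 then x i else 0) +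
     2 * (∑ i : Fin k, if k / 4 < (i : ℕ) + 1 ∧ (i : ℕ) + 1 ≤ 3 * k / 4 then x i else 0) +
     (∑ i : Fin k, if 3 * k / 4 < (i : ℕ) + 1 then x i else 0))

/-- The outer block `B_1 = {1, …, ⌊k/4⌋} ∪ {⌊3k/4⌋+1, …, k}`. -/
def wmaB1 (k : ℕ) : Finset (Fin k) :=
  Finset.univ.filter fun i => (i : ℕ) + 1 ≤ k / 4 ∨ 3 * k / 4 < (i : ℕ) + 1

/-- The middle block `B_2 = {⌊k/4⌋+1, …, ⌊3k/4⌋}`. -/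
def wmaB2 (k : ℕ) : Finset (Fin k) :=
  Finset.univ.filter fun i => k / 4 < (i : ℕ) + 1 ∧ (i : ℕ) + 1 ≤ 3 * k / 4

/-!
The Dirac measure on a single operation `g` is a fractional polymorphism as soon as `g` alone
satisfies the defining inequality, and for `g = wma (2m+1)` that inequality is exactly the
`(wma, avg)`-convexity hypothesis with `k = 2m+1`, read in `EReal` instead of `ℚ ∪ {+∞}`.
Block symmetry holds because `wma` is a weighted sum whose weights depend only on the block of
the index, so a block-preserving permutation merely reindexes each block sum.
-/

@[simp] lemma toE_top : toE ⊤ = ⊤ := rfl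

@[simp] lemma toE_coe (q : ℚ) : toE q = ((q : ℝ) : EReal) := rfl

lemma toE_monotone : Monotone toE := by
  intro a b h
  induction b using WithTop.recTopCoe with
  | top => simp
  | coe q =>
    lift a to ℚ using ne_top_of_le_ne_top WithTop.coe_ne_top h
    simpa using h

lemma toE_ne_bot (a : Cost) : toE a ≠ ⊥ := by
  induction a using WithTop.recTopCoe <;> simp

lemma toE_add (a b : Cost) : toE (a + b) = toE a + toE b := by
  induction a using WithTop.recTopCoe with
  | top => simp [EReal.top_add_of_ne_bot (toE_ne_bot b)]
  | coe p =>
    induction b using WithTop.recTopCoe with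
    | top => simp [EReal.add_top_of_ne_bot]
    | coe q => simp only [← WithTop.coe_add, toE_coe]; norm_cast

def toEAddMonoidHom : Cost →+ EReal where
  toFun := toE
  map_zero' := by simp [← WithTop.coe_zero]
  map_add' := toE_add

lemma toE_sum {ι : Type*} (s : Finset ι) (f : ι → Cost) :
    toE (∑ i ∈ s, f i) = ∑ i ∈ s, toE (f i) :=
  map_sum toEAddMonoidHom f s

lemma toE_coe_mul {q : ℚ} (hq : 0 < q) (a : Cost) :
    toE (q * a) = ((q : ℝ) : EReal) * toE a := by
  induction a using WithTop.recTopCoe with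
  | top =>
    rw [WithTop.mul_top (by exact_mod_cast hq.ne'), toE_top,
      EReal.coe_mul_top_of_pos (by exact_mod_cast hq)]
  | coe r => simp only [← WithTop.coe_mul, toE_coe]; norm_cast

lemma toE_one_div_mul_sum {k : ℕ} (hk : 0 < k) (c : Fin k → Cost) :
    toE (((1 / k : ℚ) : Cost) * ∑ i, c i) = (((1 : ℝ) / k : ℝ) : EReal) * ∑ i, toE (c i) := by
  rw [toE_coe_mul (by positivity), toE_sum]
  push_cast
  rfl

section Dirac

variable {τ : Type} {ar : τ → ℕ} {C : Type} {m : ℕ}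

def IsDeterministicFracPol (Γ : VStruct τ ar C) (g : (Fin m → C) → C) : Prop :=
  ∀ (f : τ) (a : Fin m → Fin (ar f) → C),
    toE (Γ.cost f (fun t => g (fun i => a i t)))
      ≤ (((1 : ℝ) / m : ℝ) : EReal) * ∑ i, toE (Γ.cost f (a i))

open Classical in
def FracPol.dirac {Γ : VStruct τ ar C} {g : (Fin m → C) → C} (hg : IsDeterministicFracPol Γ g) :
    FracPol Γ m where
  w h := if h = g then 1 else 0
  countable_support := (Set.countable_singleton g).mono (by simp)
  support_nonempty := ⟨g, by simp⟩
  total := hasSum_ite_eq g 1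
  le f a := by
    rw [tsum_eq_single g (fun h hne => by simp [hne])]
    simpa using hg f a

lemma FracPol.support_dirac_w {Γ : VStruct τ ar C} {g : (Fin m → C) → C} (hg : IsDeterministicFracPol Γ g) :
    Function.support (FracPol.dirac hg).w = {g} := by
  ext h
  simp [FracPol.dirac]

end Dirac

lemma wma_eq_blocks (k : ℕ) (x : Fin k → ℚ) :
    wma k x = (1 / (3 * (k : ℚ))) * ((∑ i ∈ wmaB1 k, x i) + 2 * ∑ i ∈ wmaB2 k, x i) := by
  have hdisj : Disjoint (Finset.univ.filter fun i : Fin k => (i : ℕ) + 1 ≤ k / 4)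
      (Finset.univ.filter fun i : Fin k => 3 * k / 4 < (i : ℕ) + 1) := by
    rw [Finset.disjoint_filter]
    have : k / 4 ≤ 3 * k / 4 := Nat.div_le_div_right (by omega)
    omega
  rw [wma, wmaB1, wmaB2, ← Finset.sum_filter, ← Finset.sum_filter, ← Finset.sum_filter,
    Finset.filter_or, Finset.sum_union hdisj]
  ring

lemma wma_comp_perm_of_preserves_blocks {k : ℕ} (π : Equiv.Perm (Fin k))
    (h₁ : ∀ i, π i ∈ wmaB1 k ↔ i ∈ wmaB1 k) (h₂ : ∀ i, π i ∈ wmaB2 k ↔ i ∈ wmaB2 k)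
    (x : Fin k → ℚ) : wma k (fun i => x (π i)) = wma k x := by
  simp only [wma_eq_blocks,
    Finset.sum_equiv π (fun i => (h₁ i).symm) (fun i _ => rfl : ∀ i ∈ wmaB1 k, x (π i) = x (π i)),
    Finset.sum_equiv π (fun i => (h₂ i).symm) (fun i _ => rfl : ∀ i ∈ wmaB2 k, x (π i) = x (π i))]

open Classical in
/-- if every cost function of a valued structure `Γ` with domain `ℚ` is
`(wma, avg)`-convex, then for every `m`, the deterministic measure concentrated on the
`(2m+1)`-ary 2-period weighted centred moving average is a fractional polymorphism of
`Γ`, and it is block-symmetric (every map in its support is invariant under permutations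
preserving the two blocks of `wma`). -/
theorem wma_fracPol {τ : Type} {ar : τ → ℕ} (Γ : VStruct τ ar ℚ)
    (hconv : ∀ (f : τ) (k : ℕ), 0 < k → ∀ xs : Fin k → (Fin (ar f) → ℚ),
      Γ.cost f (fun t => wma k (fun i => xs i t))
        ≤ (((1 : ℚ) / k : ℚ) : Cost) * ∑ i : Fin k, Γ.cost f (xs i)) :
    ∀ m : ℕ, ∃ ω : FracPol Γ (2 * m + 1),
      ω.w = (fun g => if g = wma (2 * m + 1) then 1 else 0) ∧
      (∀ g ∈ Function.support ω.w, ∀ π : Equiv.Perm (Fin (2 * m + 1)),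
        (∀ i, π i ∈ wmaB1 (2 * m + 1) ↔ i ∈ wmaB1 (2 * m + 1)) →
        (∀ i, π i ∈ wmaB2 (2 * m + 1) ↔ i ∈ wmaB2 (2 * m + 1)) →
        ∀ x : Fin (2 * m + 1) → ℚ, g (fun i => x (π i)) = g x) := by
  intro m
  have hwma : IsDeterministicFracPol Γ (wma (2 * m + 1)) := fun f a =>
    (toE_monotone (hconv f _ (Nat.succ_pos _) a)).trans_eq
      (toE_one_div_mul_sum (Nat.succ_pos _) _)
  refine ⟨FracPol.dirac hwma, rfl, fun g hg π h₁ h₂ x => ?_⟩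
  rw [FracPol.support_dirac_w, Set.mem_singleton_iff] at hg
  subst hg
  exact wma_comp_perm_of_preserves_blocks π h₁ h₂ x
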